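/- Let 𝔍_s = {U ∈ U(2) : det(I − U) = 0 and det(I + U) = 0} (equivalently, the unitary matrices with one eigenvalue +1 and one eigenvalue −1). Then for every U ∈ 𝔍_s the matrix I − iU is invertible, iU lies in the range of ψ, and the map U ↦ ψ⁻¹(iU) is a bijection from 𝔍_s onto the 2-sphere {x ∈ M : x⁰ = 0 and (x¹)² + (x²)² + (x³)² = 1}. -/

import Mathlib

noncomputable section

open Matrix Complex

abbrev Mat2 := Matrix (Fin 2) (Fin 2) ℂ

/-- Minkowski quadratic form on ℝ⁴. -/
def mq (x : Fin 4 → ℝ) : ℝ := -(x 0)^2 + (x 1)^2 + (x 2)^2 + (x 3)^2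

/-- The isomorphism of Minkowski space with Hermitian 2×2 matrices. -/
def mphi (x : Fin 4 → ℝ) : Mat2 :=
  !![(x 0 : ℂ) + (x 3 : ℂ), (x 1 : ℂ) - Complex.I * (x 2 : ℂ);
     (x 1 : ℂ) + Complex.I * (x 2 : ℂ), (x 0 : ℂ) - (x 3 : ℂ)]

/-- The Cayley transform. -/
def cayley (X : Mat2) : Mat2 := (X - Complex.I • 1) * (X + Complex.I • 1)⁻¹

/-- ψ = u ∘ φ : M → U(2). -/
def mpsi (x : Fin 4 → ℝ) : Mat2 := cayley (mphi x)

/-- The set 𝔍ₛ of unitary matrices with eigenvalues +1 and −1. -/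
def Js : Set Mat2 :=
  {U : Mat2 | U ∈ Matrix.unitaryGroup (Fin 2) ℂ ∧ (1 - U).det = 0 ∧ (1 + U).det = 0}


/-! By `det (1 ± U) = 1 ± tr U + det U`, the elements of 𝔍ₛ are the unitary
matrices with trace `0` and determinant `-1`. Cayley–Hamilton then gives `U² = 1`, and
unitarity turns this into `U = U*`; a traceless Hermitian matrix of determinant `-1` is
`φ(v)` for a unit spatial vector `v`. For an involution `X` we have `(X + i)(X - i) = 2`, so
`u(X) = (X - i)² / 2 = -iX`, and therefore `ψ(-v) = iU`. The map `U ↦ -φ⁻¹(U)` is inverted on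
the sphere by `x ↦ φ(-x)`. -/

def spatialUnitSphere : Set (Fin 4 → ℝ) := {x | x 0 = 0 ∧ (x 1)^2 + (x 2)^2 + (x 3)^2 = 1}

lemma mem_spatialUnitSphere_iff {x : Fin 4 → ℝ} :
    x ∈ spatialUnitSphere ↔ x 0 = 0 ∧ mq x = 1 := by
  simp only [spatialUnitSphere, Set.mem_ofPred_eq, mq, and_congr_right_iff]
  intro h0
  rw [h0]
  constructor <;> intro h <;> linarith

lemma neg_mem_spatialUnitSphere {x : Fin 4 → ℝ} (hx : x ∈ spatialUnitSphere) :
    -x ∈ spatialUnitSphere := by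
  obtain ⟨h0, h⟩ := hx
  exact ⟨by simp [h0], by simpa using h⟩

namespace Matrix

lemma isHermitian_of_mem_unitaryGroup_of_mul_self_eq_one {n α : Type*} [Fintype n]
    [DecidableEq n] [CommRing α] [StarRing α] {U : Matrix n n α}
    (hU : U ∈ unitaryGroup n α) (hUU : U * U = 1) : U.IsHermitian := by
  rw [IsHermitian, ← star_eq_conjTranspose]
  calc star U = star U * (U * U) := by rw [hUU, mul_one]
    _ = U := by rw [← mul_assoc, mem_unitaryGroup_iff'.mp hU, one_mul]

variable {R : Type*} [CommRing R] (A : Matrix (Fin 2) (Fin 2) R)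

lemma mul_self_fin_two : A * A = A.trace • A - A.det • 1 := by
  ext i j
  fin_cases i <;> fin_cases j <;> simp [mul_apply, trace_fin_two, det_fin_two] <;> ring

lemma det_one_add_fin_two : (1 + A).det = 1 + A.trace + A.det := by
  simp [det_fin_two, trace_fin_two]; ring

lemma det_one_sub_fin_two : (1 - A).det = 1 - A.trace + A.det := by
  simp [det_fin_two, trace_fin_two]; ring

lemma mul_self_eq_one_of_trace_eq_zero_of_det_eq_neg_one (ht : A.trace = 0) (hd : A.det = -1) :
    A * A = 1 := by
  simp [mul_self_fin_two, ht, hd]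

end Matrix

lemma mphi_neg (x : Fin 4 → ℝ) : mphi (-x) = -mphi x := by
  ext i j
  fin_cases i <;> fin_cases j <;> simp [mphi] <;> ring

lemma trace_mphi (x : Fin 4 → ℝ) : (mphi x).trace = 2 * x 0 := by
  simp [mphi, trace_fin_two]; ring

lemma det_mphi (x : Fin 4 → ℝ) : (mphi x).det = -mq x := by
  simp [mphi, mq, det_fin_two]; ring_nf; simp [I_sq]; ring

lemma isHermitian_mphi (x : Fin 4 → ℝ) : (mphi x).IsHermitian := by
  ext i j; fin_cases i <;> fin_cases j <;> simp [mphi, conj_ofReal]; ring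

def mphiCoords (X : Mat2) : Fin 4 → ℝ :=
  ![(X.trace / 2).re, (X 1 0).re, (X 1 0).im, ((X 0 0 - X 1 1) / 2).re]

lemma mphiCoords_mphi (x : Fin 4 → ℝ) : mphiCoords (mphi x) = x := by
  ext i; fin_cases i <;> simp [mphiCoords, mphi, trace_fin_two]

lemma mphi_mphiCoords {X : Mat2} (hX : X.IsHermitian) : mphi (mphiCoords X) = X := by
  have h00 : starRingEnd ℂ (X 0 0) = X 0 0 := by simpa using congrFun (congrFun hX 0) 0
  have h11 : starRingEnd ℂ (X 1 1) = X 1 1 := by simpa using congrFun (congrFun hX 1) 1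
  have h01 : starRingEnd ℂ (X 1 0) = X 0 1 := by simpa using congrFun (congrFun hX 0) 1
  rw [conj_eq_iff_im] at h00 h11
  ext i j
  fin_cases i <;> fin_cases j <;>
    simp [mphi, mphiCoords, trace_fin_two, Complex.ext_iff, ← h01, h00, h11] <;> ring

lemma cayley_of_mul_self_eq_one {X : Mat2} (hX : X * X = 1) : cayley X = -I • X := by
  have hinv : (X + I • 1)⁻¹ = (2 : ℂ)⁻¹ • (X - I • 1) := by
    refine inv_eq_right_inv ?_
    simp only [mul_smul_comm, smul_mul_assoc, add_mul, mul_sub, one_mul, mul_one, hX]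
    match_scalars <;> ring_nf; all_goals norm_num [I_sq]
  rw [cayley, hinv]
  simp only [mul_smul_comm, smul_mul_assoc, sub_mul, mul_sub, one_mul, mul_one, hX]
  match_scalars <;> ring_nf; all_goals norm_num [I_sq]

lemma isUnit_one_sub_I_smul {A : Type*} [Ring A] [Algebra ℂ A] {u : A} (hu : u * u = 1) :
    IsUnit (1 - I • u) := by
  refine isUnit_iff_exists.mpr ⟨(2 : ℂ)⁻¹ • (1 + I • u), ?_, ?_⟩ <;>
  · simp only [mul_smul_comm, smul_mul_assoc, sub_mul, mul_sub, add_mul, mul_add, one_mul,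
      mul_one, hu]
    match_scalars <;> ring_nf; all_goals norm_num [I_sq]

lemma mem_Js_iff {U : Mat2} :
    U ∈ Js ↔ U ∈ unitaryGroup (Fin 2) ℂ ∧ U.trace = 0 ∧ U.det = -1 := by
  simp only [Js, Set.mem_ofPred_eq, det_one_sub_fin_two, det_one_add_fin_two]
  refine and_congr_right fun _ => ⟨fun ⟨h₁, h₂⟩ => ?_, fun ⟨ht, hd⟩ => ?_⟩
  · exact ⟨by linear_combination (h₂ - h₁) / 2, by linear_combination (h₁ + h₂) / 2⟩
  · simp [ht, hd]

lemma mul_self_eq_one_of_mem_Js {U : Mat2} (hU : U ∈ Js) : U * U = 1 :=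
  have ⟨_, ht, hd⟩ := mem_Js_iff.mp hU
  mul_self_eq_one_of_trace_eq_zero_of_det_eq_neg_one _ ht hd

lemma isHermitian_of_mem_Js {U : Mat2} (hU : U ∈ Js) : U.IsHermitian :=
  Matrix.isHermitian_of_mem_unitaryGroup_of_mul_self_eq_one hU.1 (mul_self_eq_one_of_mem_Js hU)

lemma mphiCoords_mem_spatialUnitSphere_of_mem_Js {U : Mat2} (hU : U ∈ Js) :
    mphiCoords U ∈ spatialUnitSphere := by
  obtain ⟨-, ht, hd⟩ := mem_Js_iff.mp hU
  rw [← mphi_mphiCoords (isHermitian_of_mem_Js hU)] at ht hd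
  rw [trace_mphi] at ht
  rw [det_mphi] at hd
  refine mem_spatialUnitSphere_iff.mpr ⟨?_, by exact_mod_cast neg_inj.mp hd⟩
  have h : (2 * mphiCoords U 0 : ℝ) = 0 := by exact_mod_cast ht
  linarith

lemma mphi_mem_Js {x : Fin 4 → ℝ} (hx : x ∈ spatialUnitSphere) : mphi x ∈ Js := by
  obtain ⟨h0, hq⟩ := mem_spatialUnitSphere_iff.mp hx
  have ht : (mphi x).trace = 0 := by simp [trace_mphi, h0]
  have hd : (mphi x).det = -1 := by simp [det_mphi, hq]
  refine mem_Js_iff.mpr ⟨?_, ht, hd⟩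
  rw [mem_unitaryGroup_iff', star_eq_conjTranspose, (isHermitian_mphi x).eq]
  exact mul_self_eq_one_of_trace_eq_zero_of_det_eq_neg_one _ ht hd

theorem stmt3 :
    (∀ U ∈ Js, IsUnit (1 - Complex.I • U) ∧ Complex.I • U ∈ Set.range mpsi) ∧
    (∃ g : Mat2 → (Fin 4 → ℝ),
      (∀ U ∈ Js, mpsi (g U) = Complex.I • U) ∧
      Set.BijOn g Js {x : Fin 4 → ℝ | x 0 = 0 ∧ (x 1)^2 + (x 2)^2 + (x 3)^2 = 1}) := by
  have hpsi : ∀ U ∈ Js, mpsi (-mphiCoords U) = I • U := fun U hU => by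
    rw [mpsi, mphi_neg, mphi_mphiCoords (isHermitian_of_mem_Js hU),
      cayley_of_mul_self_eq_one (by simpa using mul_self_eq_one_of_mem_Js hU), neg_smul, smul_neg,
      neg_neg]
  refine ⟨fun U hU => ⟨isUnit_one_sub_I_smul (mul_self_eq_one_of_mem_Js hU), _, hpsi U hU⟩,
    fun U => -mphiCoords U, hpsi, ?_⟩
  refine Set.InvOn.bijOn (f' := fun x => mphi (-x)) ⟨fun U hU => ?_, fun x _ => ?_⟩
    (fun U hU => neg_mem_spatialUnitSphere (mphiCoords_mem_spatialUnitSphere_of_mem_Js hU))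
    (fun x hx => mphi_mem_Js (neg_mem_spatialUnitSphere hx))
  · simp [mphi_mphiCoords (isHermitian_of_mem_Js hU)]
  · simp [mphiCoords_mphi]
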